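/- arXiv:2506.21870 — 4 statements merged into one kernel-verified Lean document; each statement's English description precedes it below -/
import Mathlib

section
/- Let (A,[·,·],·) be a Poisson algebra and P: A → A a Rota–Baxter operator of weight λ. Define [a,b]_P = [P(a),b] + [a,P(b)] + λ[a,b] and a·_P b = P(a)·b + a·P(b) + λ a·b. Then (A,[·,·]_P,·_P) is a Poisson algebra, and P is a Poisson algebra homomorphism from (A,[·,·]_P,·_P) to (A,[·,·],·). -/
/-! Applying `P` to `a ∘_P b` gives `P a ∘ P b` by the Rota–Baxter identity. Using this to replace
`P (b ∘_P c)` in the expansion of each Poisson axiom for the descendent operations, every axiom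
follows term by term from the same axiom for the original operations. -/

open TensorProduct

section Preamble

variable {k A : Type*} [Field k] [AddCommGroup A] [Module k A]

/-- The Poisson algebra axioms for a pair of bilinear operations `br` (the Lie bracket)
and `mul` (the commutative associative product), including the Leibniz compatibility. -/
structure IsPoisson {k A : Type*} [Field k] [AddCommGroup A] [Module k A]
    (br mul : A →ₗ[k] A →ₗ[k] A) : Prop where
  antisymm : ∀ a b, br a b = - br b a
  jacobi : ∀ a b c, br a (br b c) = br (br a b) c + br b (br a c)
  comm : ∀ a b, mul a b = mul b a
  assoc : ∀ a b c, mul (mul a b) c = mul a (mul b c)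
  leibniz : ∀ a b c, br a (mul b c) = mul (br a b) c + mul b (br a c)

/-- `r ↦ r₊`, where `⟨r₊(x*), y*⟩ = ⟨r, x* ⊗ y*⟩`. -/
noncomputable def rPlus : (A ⊗[k] A) →ₗ[k] Module.Dual k A →ₗ[k] A :=
  TensorProduct.lift <| LinearMap.mk₂ k
    (fun a b => (Module.Dual.eval k A a).smulRight b)
    (fun a a' b => by ext f; simp [add_smul])
    (fun c a b => by ext f; simp [smul_smul])
    (fun a b b' => by ext f; simp)
    (fun c a b => by ext f; simp [smul_smul, mul_comm])

/-- The flip `τ : A ⊗ A → A ⊗ A`. -/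
noncomputable def tauT : (A ⊗[k] A) →ₗ[k] A ⊗[k] A := (TensorProduct.comm k A A).toLinearMap

/-- `r ↦ r₋`, where `⟨r₊(x*), y*⟩ = ⟨r, x* ⊗ y*⟩ = −⟨x*, r₋(y*)⟩`. -/
noncomputable def rMinus : (A ⊗[k] A) →ₗ[k] Module.Dual k A →ₗ[k] A :=
  - (rPlus ∘ₗ tauT)

@[simp] lemma rPlus_tmul (a b : A) (f : Module.Dual k A) :
    rPlus (a ⊗ₜ[k] b) f = f a • b := rfl

@[simp] lemma dualMap_add_apply (f g : A →ₗ[k] A) (y : Module.Dual k A) :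
    (f + g).dualMap y = f.dualMap y + g.dualMap y := by ext a; simp

@[simp] lemma dualMap_smul_apply (c : k) (f : A →ₗ[k] A) (y : Module.Dual k A) :
    (c • f).dualMap y = c • f.dualMap y := by ext a; simp

@[simp] lemma dualMap_neg_apply (f : A →ₗ[k] A) (y : Module.Dual k A) :
    (-f).dualMap y = - f.dualMap y := by ext a; simp

noncomputable def T1213 (m : A →ₗ[k] A →ₗ[k] A) :
    (A ⊗[k] A) ⊗[k] (A ⊗[k] A) →ₗ[k] A ⊗[k] (A ⊗[k] A) :=
  (TensorProduct.map (TensorProduct.lift m) LinearMap.id) ∘ₗ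
    (TensorProduct.tensorTensorTensorComm k A A A A).toLinearMap

noncomputable def T1323 (m : A →ₗ[k] A →ₗ[k] A) :
    (A ⊗[k] A) ⊗[k] (A ⊗[k] A) →ₗ[k] A ⊗[k] (A ⊗[k] A) :=
  (TensorProduct.assoc k A A A).toLinearMap ∘ₗ
    (TensorProduct.map LinearMap.id (TensorProduct.lift m)) ∘ₗ
    (TensorProduct.tensorTensorTensorComm k A A A A).toLinearMap

noncomputable def T2312 (m : A →ₗ[k] A →ₗ[k] A) :
    (A ⊗[k] A) ⊗[k] (A ⊗[k] A) →ₗ[k] A ⊗[k] (A ⊗[k] A) :=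
  (TensorProduct.leftComm k A A A).toLinearMap ∘ₗ
    (TensorProduct.map (TensorProduct.lift m ∘ₗ (TensorProduct.comm k A A).toLinearMap)
      LinearMap.id) ∘ₗ
    (TensorProduct.tensorTensorTensorComm k A A A A).toLinearMap ∘ₗ
    (TensorProduct.map (TensorProduct.comm k A A).toLinearMap LinearMap.id)

noncomputable def T1223 (m : A →ₗ[k] A →ₗ[k] A) :
    (A ⊗[k] A) ⊗[k] (A ⊗[k] A) →ₗ[k] A ⊗[k] (A ⊗[k] A) :=
  (TensorProduct.leftComm k A A A).toLinearMap ∘ₗ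
    (TensorProduct.map (TensorProduct.lift m) LinearMap.id) ∘ₗ
    (TensorProduct.tensorTensorTensorComm k A A A A).toLinearMap ∘ₗ
    (TensorProduct.map (TensorProduct.comm k A A).toLinearMap LinearMap.id)

/-- `C(r) = [r₁₂,r₁₃] + [r₁₃,r₂₃] + [r₁₂,r₂₃]` for the bracket `br`. -/
noncomputable def cybe (br : A →ₗ[k] A →ₗ[k] A) (r : A ⊗[k] A) : A ⊗[k] (A ⊗[k] A) :=
  T1213 br (r ⊗ₜ[k] r) + T1323 br (r ⊗ₜ[k] r) + T1223 br (r ⊗ₜ[k] r)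

/-- `A(r) = r₁₂·r₁₃ + r₁₃·r₂₃ − r₂₃·r₁₂` for the product `mul`. -/
noncomputable def aybe (mul : A →ₗ[k] A →ₗ[k] A) (r : A ⊗[k] A) : A ⊗[k] (A ⊗[k] A) :=
  T1213 mul (r ⊗ₜ[k] r) + T1323 mul (r ⊗ₜ[k] r) - T2312 mul (r ⊗ₜ[k] r)

/-- `r` is a solution of the Poisson Yang–Baxter equation: `C(r) = 0` and `A(r) = 0`. -/
def IsPYBESolution (br mul : A →ₗ[k] A →ₗ[k] A) (r : A ⊗[k] A) : Prop :=
  cybe br r = 0 ∧ aybe mul r = 0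

variable (k A) in
/-- `σ₁₃ : a ⊗ b ⊗ c ↦ c ⊗ b ⊗ a`. -/
noncomputable def sigma13 : A ⊗[k] (A ⊗[k] A) →ₗ[k] A ⊗[k] (A ⊗[k] A) :=
  (TensorProduct.map LinearMap.id (TensorProduct.comm k A A).toLinearMap) ∘ₗ
    (TensorProduct.leftComm k A A A).toLinearMap ∘ₗ
    (TensorProduct.map LinearMap.id (TensorProduct.comm k A A).toLinearMap)

/-- `s ∈ A ⊗ A` is `(ad, L)`-invariant:
`(ad(a)⊗id + id⊗ad(a))(s) = 0` and `(L(a)⊗id − id⊗L(a))(s) = 0` for all `a`. -/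
def IsAdLInvariant (br mul : A →ₗ[k] A →ₗ[k] A) (s : A ⊗[k] A) : Prop :=
  ∀ a : A,
    TensorProduct.map (br a) LinearMap.id s + TensorProduct.map LinearMap.id (br a) s = 0 ∧
    TensorProduct.map (mul a) LinearMap.id s - TensorProduct.map LinearMap.id (mul a) s = 0

/-- The bracket `[x*,y*]_r = −ad*(r₊(x*))y* + ad*(r₋(y*))x*` on the dual space. -/
noncomputable def dualBr (br : A →ₗ[k] A →ₗ[k] A) (r : A ⊗[k] A) :
    Module.Dual k A →ₗ[k] Module.Dual k A →ₗ[k] Module.Dual k A :=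
  LinearMap.mk₂ k
    (fun x y => - (br (rPlus r x)).dualMap y + (br (rMinus r y)).dualMap x)
    (fun x x' y => by simp [map_add]; try abel)
    (fun c x y => by simp [map_smul, smul_add]; try abel)
    (fun x y y' => by simp [map_add]; try abel)
    (fun c x y => by simp [map_smul, smul_add]; try abel)

/-- The product `x*·_r y* = L*(r₊(x*))y* + L*(r₋(y*))x*` on the dual space. -/
noncomputable def dualMul (mul : A →ₗ[k] A →ₗ[k] A) (r : A ⊗[k] A) :
    Module.Dual k A →ₗ[k] Module.Dual k A →ₗ[k] Module.Dual k A :=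
  LinearMap.mk₂ k
    (fun x y => (mul (rPlus r x)).dualMap y + (mul (rMinus r y)).dualMap x)
    (fun x x' y => by simp [map_add]; try abel)
    (fun c x y => by simp [map_smul, smul_add]; try abel)
    (fun x y y' => by simp [map_add]; try abel)
    (fun c x y => by simp [map_smul, smul_add]; try abel)

/-- The descendent operation `a ∘_P b = (P a) ∘ b + a ∘ (P b) + λ a ∘ b`. -/
noncomputable def descOp (m : A →ₗ[k] A →ₗ[k] A) (lam : k) (P : A →ₗ[k] A) :
    A →ₗ[k] A →ₗ[k] A :=
  LinearMap.mk₂ k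
    (fun a b => m (P a) b + m a (P b) + lam • m a b)
    (fun a a' b => by simp [map_add, smul_add]; try abel)
    (fun c a b => by simp [map_smul, smul_add, smul_smul, mul_comm]; try abel)
    (fun a b b' => by simp [map_add, smul_add]; try abel)
    (fun c a b => by simp [map_smul, smul_add, smul_smul, mul_comm]; try abel)

/-- `P` is a Rota–Baxter operator of weight `λ` on the Poisson algebra `(A, br, mul)`. -/
def IsRotaBaxter (br mul : A →ₗ[k] A →ₗ[k] A) (lam : k) (P : A →ₗ[k] A) : Prop :=
  (∀ a b, br (P a) (P b) = P (br (P a) b + br a (P b) + lam • br a b)) ∧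
  (∀ a b, mul (P a) (P b) = P (mul (P a) b + mul a (P b) + lam • mul a b))

/-- `((A, br, mul), B, P)` is a quadratic Rota–Baxter Poisson algebra of weight `λ`. -/
structure IsQuadraticRotaBaxter {k A : Type*} [Field k] [AddCommGroup A] [Module k A]
    (br mul : A →ₗ[k] A →ₗ[k] A) (B : A →ₗ[k] A →ₗ[k] k) (lam : k) (P : A →ₗ[k] A) :
    Prop where
  poisson : IsPoisson br mul
  symm : ∀ a b, B a b = B b a
  nondeg : ∀ a, (∀ b, B a b = 0) → a = 0
  br_invariant : ∀ a b c, B (br a b) c = B a (br b c)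
  mul_invariant : ∀ a b c, B (mul a b) c = B a (mul b c)
  rb : IsRotaBaxter br mul lam P
  compat : ∀ a b, B a (P b) + B (P a) b + lam • B a b = 0

/-- The semidirect-product bracket on `A ⊕ A*`:
`[(a,x*),(b,y*)] = ([a,b], −ad*(a)y* + ad*(b)x*)`. -/
noncomputable def sdBr (br : A →ₗ[k] A →ₗ[k] A) :
    (A × Module.Dual k A) →ₗ[k] (A × Module.Dual k A) →ₗ[k] (A × Module.Dual k A) :=
  LinearMap.mk₂ k
    (fun p q => (br p.1 q.1, - (br p.1).dualMap q.2 + (br q.1).dualMap p.2))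
    (fun p p' q => by simp [Prod.ext_iff, map_add]; try abel)
    (fun c p q => by simp [Prod.ext_iff, map_smul, smul_add]; try abel)
    (fun p q q' => by simp [Prod.ext_iff, map_add]; try abel)
    (fun c p q => by simp [Prod.ext_iff, map_smul, smul_add]; try abel)

/-- The semidirect-product multiplication on `A ⊕ A*`:
`(a,x*)·(b,y*) = (a·b, L*(a)y* + L*(b)x*)`. -/
noncomputable def sdMul (mul : A →ₗ[k] A →ₗ[k] A) :
    (A × Module.Dual k A) →ₗ[k] (A × Module.Dual k A) →ₗ[k] (A × Module.Dual k A) :=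
  LinearMap.mk₂ k
    (fun p q => (mul p.1 q.1, (mul p.1).dualMap q.2 + (mul q.1).dualMap p.2))
    (fun p p' q => by simp [Prod.ext_iff, map_add]; try abel)
    (fun c p q => by simp [Prod.ext_iff, map_smul, smul_add]; try abel)
    (fun p q q' => by simp [Prod.ext_iff, map_add]; try abel)
    (fun c p q => by simp [Prod.ext_iff, map_smul, smul_add]; try abel)

/-- The canonical bilinear form `𝔅_d((a,x*),(b,y*)) = ⟨a,y*⟩ + ⟨b,x*⟩` on `A ⊕ A*`. -/
noncomputable def sdForm :
    (A × Module.Dual k A) →ₗ[k] (A × Module.Dual k A) →ₗ[k] k :=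
  LinearMap.mk₂ k
    (fun p q => q.2 p.1 + p.2 q.1)
    (fun p p' q => by simp; try ring)
    (fun c p q => by simp [smul_add, smul_smul]; try ring)
    (fun p q q' => by simp; try ring)
    (fun c p q => by simp [smul_add, smul_smul]; try ring)

end Preamble

section Descendent

variable {k A : Type*} [Field k] [AddCommGroup A] [Module k A]

def IsRotaBaxterOp (m : A →ₗ[k] A →ₗ[k] A) (lam : k) (P : A →ₗ[k] A) : Prop :=
  ∀ a b, m (P a) (P b) = P (m (P a) b + m a (P b) + lam • m a b)

theorem descOp_apply (m : A →ₗ[k] A →ₗ[k] A) (lam : k) (P : A →ₗ[k] A) (a b : A) :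
    descOp m lam P a b = m (P a) b + m a (P b) + lam • m a b :=
  rfl

theorem IsRotaBaxterOp.map_descOp {m : A →ₗ[k] A →ₗ[k] A} {lam : k} {P : A →ₗ[k] A}
    (hm : IsRotaBaxterOp m lam P) (a b : A) : P (descOp m lam P a b) = m (P a) (P b) :=
  (hm a b).symm

theorem descOp_antisymm {m : A →ₗ[k] A →ₗ[k] A} (lam : k) (P : A →ₗ[k] A)
    (h : ∀ a b, m a b = - m b a) (a b : A) : descOp m lam P a b = - descOp m lam P b a := by
  simp only [descOp_apply, h (P a) b, h a (P b), h a b]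
  module

theorem descOp_comm {m : A →ₗ[k] A →ₗ[k] A} (lam : k) (P : A →ₗ[k] A)
    (h : ∀ a b, m a b = m b a) (a b : A) : descOp m lam P a b = descOp m lam P b a := by
  simp only [descOp_apply, h (P a) b, h a (P b), h a b]
  module

/-- With `d = m` this is the Jacobi identity in Leibniz form. -/
theorem descOp_leibniz {d m : A →ₗ[k] A →ₗ[k] A} {lam : k} {P : A →ₗ[k] A}
    (hd : IsRotaBaxterOp d lam P) (hm : IsRotaBaxterOp m lam P)
    (h : ∀ a b c, d a (m b c) = m (d a b) c + m b (d a c)) (a b c : A) :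
    descOp d lam P a (descOp m lam P b c) =
      descOp m lam P (descOp d lam P a b) c + descOp m lam P b (descOp d lam P a c) := by
  rw [descOp_apply d lam P a (descOp m lam P b c), descOp_apply m lam P (descOp d lam P a b) c,
    descOp_apply m lam P b (descOp d lam P a c), hd.map_descOp, hd.map_descOp, hm.map_descOp]
  simp only [descOp_apply, map_add, map_smul, LinearMap.add_apply, LinearMap.smul_apply, h]
  module

theorem descOp_assoc {m : A →ₗ[k] A →ₗ[k] A} {lam : k} {P : A →ₗ[k] A}
    (hm : IsRotaBaxterOp m lam P) (h : ∀ a b c, m (m a b) c = m a (m b c)) (a b c : A) :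
    descOp m lam P (descOp m lam P a b) c = descOp m lam P a (descOp m lam P b c) := by
  rw [descOp_apply m lam P (descOp m lam P a b) c, descOp_apply m lam P a (descOp m lam P b c),
    hm.map_descOp, hm.map_descOp]
  simp only [descOp_apply, map_add, map_smul, LinearMap.add_apply, LinearMap.smul_apply, h]
  module

theorem IsPoisson.descOp {br mul : A →ₗ[k] A →ₗ[k] A} (hP : IsPoisson br mul) {lam : k}
    {P : A →ₗ[k] A} (hbr : IsRotaBaxterOp br lam P) (hmul : IsRotaBaxterOp mul lam P) :
    IsPoisson (descOp br lam P) (descOp mul lam P) where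
  antisymm := descOp_antisymm lam P hP.antisymm
  jacobi := descOp_leibniz hbr hbr hP.jacobi
  comm := descOp_comm lam P hP.comm
  assoc := descOp_assoc hmul hP.assoc
  leibniz := descOp_leibniz hbr hmul hP.leibniz

end Descendent

/-- the descendent operations of a Rota–Baxter operator of weight `λ` on a
Poisson algebra form a Poisson algebra, and `P` is a Poisson algebra homomorphism from the
descendent Poisson algebra to the original one. -/
theorem statement10 {k A : Type*} [Field k] [AddCommGroup A] [Module k A]
    (br mul : A →ₗ[k] A →ₗ[k] A) (hP : IsPoisson br mul)
    (lam : k) (P : A →ₗ[k] A) (hRB : IsRotaBaxter br mul lam P) :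
    IsPoisson (descOp br lam P) (descOp mul lam P) ∧
    (∀ a b, P (descOp br lam P a b) = br (P a) (P b)) ∧
    (∀ a b, P (descOp mul lam P a b) = mul (P a) (P b)) :=
  have hbr : IsRotaBaxterOp br lam P := hRB.1
  have hmul : IsRotaBaxterOp mul lam P := hRB.2
  ⟨hP.descOp hbr hmul, hbr.map_descOp, hmul.map_descOp⟩
end

section
/- Let (A,[·,·]_A,·_A) be a finite-dimensional Poisson algebra over a field and P: A → A a Rota–Baxter operator of weight λ on it. Let 𝔄 = A ⊕ A* carry the semi-direct product Poisson structure [(a,x*),(b,y*)] = ([a,b]_A, −ad*(a)y* + ad*(b)x*), (a,x*)·(b,y*) = (a·_A b, L*(a)y* + L*(b)x*), and the form 𝔅_d((a,x*),(b,y*)) = ⟨a,y*⟩ + ⟨b,x*⟩. Then ((𝔄,[·,·],·), 𝔅_d, P + P̃*) is a quadratic Rota–Baxter Poisson algebra of weight λ, where P̃ = −λ·id − P and (P + P̃*)(a,x*) = (P(a), P̃*(x*)). -/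
open TensorProduct

/-!
All axioms are checked componentwise on `A ⊕ A*`. First components are the axioms of `A`; second
components, evaluated at `w : A`, are the same axioms of `A` paired with the dual vectors. The one
step with content is the Rota–Baxter identity on `A*`: for `P̃ = −λ·id − P`, the Rota–Baxter
identity of `P` for an operation `m` is equivalent to
`P̃ (m (P a) w) = m (P a) (P̃ w) + P̃ (m a (P̃ w)) + λ m a (P̃ w)`,
whose transpose is exactly the Rota–Baxter identity of `P̃*` on the coadjoint action.
-/

section SemidirectProduct

variable {k A : Type*} [Field k] [AddCommGroup A] [Module k A]

@[simp] lemma sdBr_fst (br : A →ₗ[k] A →ₗ[k] A) (p q : A × Module.Dual k A) :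
    (sdBr br p q).1 = br p.1 q.1 := rfl

@[simp] lemma sdBr_snd_apply (br : A →ₗ[k] A →ₗ[k] A) (p q : A × Module.Dual k A) (w : A) :
    (sdBr br p q).2 w = - q.2 (br p.1 w) + p.2 (br q.1 w) := rfl

@[simp] lemma sdMul_fst (mul : A →ₗ[k] A →ₗ[k] A) (p q : A × Module.Dual k A) :
    (sdMul mul p q).1 = mul p.1 q.1 := rfl

@[simp] lemma sdMul_snd_apply (mul : A →ₗ[k] A →ₗ[k] A) (p q : A × Module.Dual k A) (w : A) :
    (sdMul mul p q).2 w = q.2 (mul p.1 w) + p.2 (mul q.1 w) := rfl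

@[simp] lemma sdForm_apply (p q : A × Module.Dual k A) :
    sdForm p q = q.2 p.1 + p.2 q.1 := rfl

lemma sd_ext {p q : A × Module.Dual k A} (h₁ : p.1 = q.1) (h₂ : ∀ w, p.2 w = q.2 w) :
    p = q :=
  Prod.ext h₁ (LinearMap.ext h₂)

lemma sdBr_antisymm {br : A →ₗ[k] A →ₗ[k] A} (h : ∀ a b, br a b = - br b a)
    (p q : A × Module.Dual k A) : sdBr br p q = - sdBr br q p :=
  sd_ext (h _ _) fun w => by simp only [sdBr_snd_apply, Prod.snd_neg, LinearMap.neg_apply]; ring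

lemma sdBr_jacobi {br : A →ₗ[k] A →ₗ[k] A}
    (h : ∀ a b c, br a (br b c) = br (br a b) c + br b (br a c)) (p q r : A × Module.Dual k A) :
    sdBr br p (sdBr br q r) = sdBr br (sdBr br p q) r + sdBr br q (sdBr br p r) := by
  obtain ⟨a, x⟩ := p; obtain ⟨b, y⟩ := q; obtain ⟨c, z⟩ := r
  refine sd_ext (h _ _ _) fun w => ?_
  have h₁ := congrArg x (h b c w)
  have h₂ := congrArg z (h a b w)
  have h₃ := congrArg y (h a c w)
  simp only [map_add] at h₁ h₂ h₃
  simp only [sdBr_fst, sdBr_snd_apply, Prod.snd_add, LinearMap.add_apply]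
  linear_combination -h₁ - h₂ + h₃

lemma sdMul_comm {mul : A →ₗ[k] A →ₗ[k] A} (h : ∀ a b, mul a b = mul b a)
    (p q : A × Module.Dual k A) : sdMul mul p q = sdMul mul q p :=
  sd_ext (h _ _) fun w => by simp only [sdMul_snd_apply]; ring

lemma sdMul_assoc {mul : A →ₗ[k] A →ₗ[k] A} (hc : ∀ a b, mul a b = mul b a)
    (ha : ∀ a b c, mul (mul a b) c = mul a (mul b c)) (p q r : A × Module.Dual k A) :
    sdMul mul (sdMul mul p q) r = sdMul mul p (sdMul mul q r) := by
  obtain ⟨a, x⟩ := p; obtain ⟨b, y⟩ := q; obtain ⟨c, z⟩ := r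
  refine sd_ext (ha _ _ _) fun w => ?_
  have h₁ := congrArg y (ha a c w)
  have h₂ := congrArg x (ha b c w)
  have h₃ := congrArg z (congrArg (mul · w) (hc a b))
  have h₄ := congrArg z (ha b a w)
  have h₅ := congrArg y (congrArg (mul · w) (hc a c))
  have h₆ := congrArg y (ha c a w)
  simp only [sdMul_fst, sdMul_snd_apply]
  linear_combination h₃ + h₄ - h₁ + h₅ + h₆ - h₂

lemma sdBr_sdMul_leibniz {br mul : A →ₗ[k] A →ₗ[k] A} (hP : IsPoisson br mul)
    (p q r : A × Module.Dual k A) :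
    sdBr br p (sdMul mul q r) = sdMul mul (sdBr br p q) r + sdMul mul q (sdBr br p r) := by
  obtain ⟨a, x⟩ := p; obtain ⟨b, y⟩ := q; obtain ⟨c, z⟩ := r
  refine sd_ext (hP.leibniz _ _ _) fun w => ?_
  have hbc : br (mul b c) w = mul c (br b w) + mul b (br c w) := by
    rw [hP.antisymm, hP.leibniz, hP.antisymm w b, hP.antisymm w c]
    simp only [map_neg, LinearMap.neg_apply, neg_add, neg_neg]
    rw [hP.comm (br b w) c]
  have h₁ := congrArg z (hP.leibniz a b w)
  have h₂ := congrArg y (hP.leibniz a c w)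
  have h₃ := congrArg x (hP.leibniz b c w)
  have h₄ := congrArg x (hP.leibniz c b w)
  have h₅ := congrArg (fun t => x (mul t w)) (hP.antisymm c b)
  have h₆ := congrArg x hbc
  simp only [map_add, map_neg, LinearMap.neg_apply] at h₁ h₂ h₃ h₄ h₅ h₆
  simp only [sdBr_fst, sdBr_snd_apply, sdMul_fst, sdMul_snd_apply, Prod.snd_add,
    LinearMap.add_apply]
  linear_combination h₁ + h₂ + h₆ - h₃ - h₄ - h₅

theorem IsPoisson.semidirect {br mul : A →ₗ[k] A →ₗ[k] A} (hP : IsPoisson br mul) :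
    IsPoisson (sdBr br) (sdMul mul) where
  antisymm := sdBr_antisymm hP.antisymm
  jacobi := sdBr_jacobi hP.jacobi
  comm := sdMul_comm hP.comm
  assoc := sdMul_assoc hP.comm hP.assoc
  leibniz := sdBr_sdMul_leibniz hP

lemma sdForm_symm (p q : A × Module.Dual k A) : sdForm p q = sdForm q p := by
  simp only [sdForm_apply]; ring

lemma sdForm_nondeg (p : A × Module.Dual k A) (h : ∀ q, sdForm p q = 0) : p = 0 := by
  have h₁ : p.1 = 0 := (Module.forall_dual_apply_eq_zero_iff k p.1).mp fun f => by
    simpa using h (0, f)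
  exact Prod.ext h₁ (LinearMap.ext fun b => by simpa [h₁] using h (b, 0))

lemma sdForm_sdBr {br : A →ₗ[k] A →ₗ[k] A} (h : ∀ a b, br a b = - br b a)
    (p q r : A × Module.Dual k A) : sdForm (sdBr br p q) r = sdForm p (sdBr br q r) := by
  obtain ⟨a, x⟩ := p; obtain ⟨b, y⟩ := q; obtain ⟨c, z⟩ := r
  have h₁ := congrArg z (h a b)
  have h₂ := congrArg y (h a c)
  simp only [map_neg] at h₁ h₂
  simp only [sdForm_apply, sdBr_fst, sdBr_snd_apply]
  linear_combination h₁ - h₂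

lemma sdForm_sdMul {mul : A →ₗ[k] A →ₗ[k] A} (h : ∀ a b, mul a b = mul b a)
    (p q r : A × Module.Dual k A) : sdForm (sdMul mul p q) r = sdForm p (sdMul mul q r) := by
  obtain ⟨a, x⟩ := p; obtain ⟨b, y⟩ := q; obtain ⟨c, z⟩ := r
  simp only [sdForm_apply, sdMul_fst, sdMul_snd_apply]
  linear_combination congrArg z (h a b) + congrArg y (h a c)

end SemidirectProduct

section RotaBaxter

variable {k A : Type*} [Field k] [AddCommGroup A] [Module k A]

noncomputable def rbTilde (lam : k) (P : A →ₗ[k] A) : A →ₗ[k] A :=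
  (-lam) • LinearMap.id - P

lemma rbTilde_apply (lam : k) (P : A →ₗ[k] A) (a : A) :
    rbTilde lam P a = -lam • a - P a :=
  rfl

lemma rbTilde_comp_of_rotaBaxter {m : A →ₗ[k] A →ₗ[k] A} {lam : k} {P : A →ₗ[k] A}
    (h : ∀ a b, m (P a) (P b) = P (m (P a) b + m a (P b) + lam • m a b)) (a w : A) :
    rbTilde lam P (m (P a) w) =
      m (P a) (rbTilde lam P w) + rbTilde lam P (m a (rbTilde lam P w))
        + lam • m a (rbTilde lam P w) := by
  simp only [rbTilde_apply, map_add, map_sub, map_smul, h a w]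
  module

noncomputable def sdRotaBaxter (lam : k) (P : A →ₗ[k] A) :
    (A × Module.Dual k A) →ₗ[k] (A × Module.Dual k A) :=
  P.prodMap (rbTilde lam P).dualMap

lemma sdBr_rotaBaxter {br : A →ₗ[k] A →ₗ[k] A} {lam : k} {P : A →ₗ[k] A}
    (h : ∀ a b, br (P a) (P b) = P (br (P a) b + br a (P b) + lam • br a b))
    (p q : A × Module.Dual k A) :
    sdBr br (sdRotaBaxter lam P p) (sdRotaBaxter lam P q) =
      sdRotaBaxter lam P (sdBr br (sdRotaBaxter lam P p) q + sdBr br p (sdRotaBaxter lam P q)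
        + lam • sdBr br p q) := by
  obtain ⟨a, x⟩ := p; obtain ⟨b, y⟩ := q
  refine sd_ext (by simpa [sdRotaBaxter] using h a b) fun w => ?_
  have hx := congrArg x (rbTilde_comp_of_rotaBaxter h b w)
  have hy := congrArg y (rbTilde_comp_of_rotaBaxter h a w)
  simp only [map_add, map_smul] at hx hy
  simp only [sdRotaBaxter, LinearMap.prodMap_apply, sdBr_snd_apply, LinearMap.dualMap_apply,
    sdBr_fst, map_add, map_smul, Prod.snd_add, Prod.smul_snd, LinearMap.add_apply,
    LinearMap.smul_apply, smul_eq_mul]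
  linear_combination hx - hy

lemma sdMul_rotaBaxter {mul : A →ₗ[k] A →ₗ[k] A} {lam : k} {P : A →ₗ[k] A}
    (h : ∀ a b, mul (P a) (P b) = P (mul (P a) b + mul a (P b) + lam • mul a b))
    (p q : A × Module.Dual k A) :
    sdMul mul (sdRotaBaxter lam P p) (sdRotaBaxter lam P q) =
      sdRotaBaxter lam P (sdMul mul (sdRotaBaxter lam P p) q + sdMul mul p (sdRotaBaxter lam P q)
        + lam • sdMul mul p q) := by
  obtain ⟨a, x⟩ := p; obtain ⟨b, y⟩ := q
  refine sd_ext (by simpa [sdRotaBaxter] using h a b) fun w => ?_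
  have hx := congrArg x (rbTilde_comp_of_rotaBaxter h b w)
  have hy := congrArg y (rbTilde_comp_of_rotaBaxter h a w)
  simp only [map_add, map_smul] at hx hy
  simp only [sdRotaBaxter, LinearMap.prodMap_apply, sdMul_snd_apply, LinearMap.dualMap_apply,
    sdMul_fst, map_add, map_smul, Prod.snd_add, Prod.smul_snd, LinearMap.add_apply,
    LinearMap.smul_apply, smul_eq_mul]
  linear_combination hx + hy

theorem IsRotaBaxter.semidirect {br mul : A →ₗ[k] A →ₗ[k] A} {lam : k} {P : A →ₗ[k] A}
    (h : IsRotaBaxter br mul lam P) :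
    IsRotaBaxter (sdBr br) (sdMul mul) lam (sdRotaBaxter lam P) :=
  ⟨sdBr_rotaBaxter h.1, sdMul_rotaBaxter h.2⟩

lemma sdForm_sdRotaBaxter (lam : k) (P : A →ₗ[k] A) (p q : A × Module.Dual k A) :
    sdForm p (sdRotaBaxter lam P q) + sdForm (sdRotaBaxter lam P p) q + lam • sdForm p q = 0 := by
  simp only [sdForm_apply, sdRotaBaxter, LinearMap.prodMap_apply, LinearMap.dualMap_apply,
    rbTilde_apply, map_sub, map_smul, smul_eq_mul]
  ring

end RotaBaxter

theorem statement12_general {k A : Type*} [Field k] [AddCommGroup A] [Module k A]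
    (br mul : A →ₗ[k] A →ₗ[k] A) (hP : IsPoisson br mul)
    (lam : k) (P : A →ₗ[k] A) (hRB : IsRotaBaxter br mul lam P) :
    IsQuadraticRotaBaxter (sdBr br) (sdMul mul) sdForm lam
      (P.prodMap (((-lam) • (LinearMap.id : A →ₗ[k] A) - P).dualMap)) :=
  { poisson := hP.semidirect
    symm := sdForm_symm
    nondeg := sdForm_nondeg
    br_invariant := sdForm_sdBr hP.antisymm
    mul_invariant := sdForm_sdMul hP.comm
    rb := hRB.semidirect
    compat := sdForm_sdRotaBaxter lam P }

/-- a Rota–Baxter operator `P` of weight `λ` on a Poisson algebra `A` yields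
the quadratic Rota–Baxter Poisson algebra `((A ⋉ A*, [·,·], ·), 𝔅_d, P + P̃*)` of weight
`λ`, where `P̃ = −λ·id − P`. -/
theorem statement12 {k A : Type*} [Field k] [AddCommGroup A] [Module k A]
    [FiniteDimensional k A]
    (br mul : A →ₗ[k] A →ₗ[k] A) (hP : IsPoisson br mul)
    (lam : k) (P : A →ₗ[k] A) (hRB : IsRotaBaxter br mul lam P) :
    IsQuadraticRotaBaxter (sdBr br) (sdMul mul) sdForm lam
      (P.prodMap (((-lam) • (LinearMap.id : A →ₗ[k] A) - P).dualMap)) :=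
  statement12_general br mul hP lam P hRB
end

section
/- Let ((A,[·,·],·),𝔅,P) be a finite-dimensional quadratic Rota–Baxter Poisson algebra of weight 0, I_𝔅: A* → A the linear isomorphism induced by 𝔅, and r ∈ A⊗A the 2-tensor form of P ∘ I_𝔅, i.e., ⟨r, x*⊗y*⟩ = ⟨(P ∘ I_𝔅)(x*), y*⟩. Then r is antisymmetric (τ(r) = −r) and r is a solution of the Poisson Yang–Baxter equation in (A,[·,·],·); hence r induces a triangular Poisson bialgebra. -/
/-!
Writing every functional as `f = 𝔅(I_𝔅 f, ·)`, the contraction `r₊` of `r` is `P ∘ I_𝔅`, and the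
skewness of `P` for `𝔅` makes `r` antisymmetric. A 3-tensor over a finite-dimensional space vanishes
once all its evaluations on `f ⊗ g ⊗ h` do. For antisymmetric `r`, with `u, v, w` the images of
`f, g, h` under `I_𝔅`, these evaluations of `C(r)` and `A(r)` are
`𝔅(u,[Pv,Pw]) + 𝔅(w,[Pu,Pv]) − 𝔅(v,[Pu,Pw])` and `𝔅(u,Pv·Pw) + 𝔅(w,Pu·Pv) + 𝔅(v,Pw·Pu)`.
Expanding the first term by the Rota–Baxter identity and moving `P` across `𝔅` cancels the other
two, thanks to the cyclic symmetry `𝔅(a, b∘c) = 𝔅(c, a∘b)` of an invariant symmetric form.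
-/

open TensorProduct

section Separation

open Module

variable {R M N L : Type*} [CommRing R] [AddCommGroup M] [Module R M] [AddCommGroup N]
  [Module R N] [AddCommGroup L] [Module R L]

noncomputable def TensorProduct.dualDistrib₃ (f : Dual R M) (g : Dual R N) (h : Dual R L) :
    Dual R (M ⊗[R] (N ⊗[R] L)) :=
  dualDistrib R M (N ⊗[R] L) (f ⊗ₜ dualDistrib R N L (g ⊗ₜ h))

@[simp] lemma TensorProduct.dualDistrib₃_tmul (f : Dual R M) (g : Dual R N) (h : Dual R L)
    (a : M) (b : N) (c : L) : dualDistrib₃ f g h (a ⊗ₜ (b ⊗ₜ c)) = f a * (g b * h c) := rfl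

variable [Free R M] [Module.Finite R M] [Free R N] [Module.Finite R N]
  [Free R L] [Module.Finite R L]

theorem TensorProduct.eq_zero_of_forall_dualDistrib_apply_eq_zero {t : M ⊗[R] N}
    (h : ∀ (f : Dual R M) (g : Dual R N), dualDistrib R M N (f ⊗ₜ g) t = 0) : t = 0 := by
  refine (forall_dual_apply_eq_zero_iff R t).mp fun φ => ?_
  obtain ⟨x, rfl⟩ := (dualDistribEquiv R M N).surjective φ
  induction x using TensorProduct.induction_on with
  | zero => simp
  | tmul f g => exact h f g
  | add x y hx hy => simp_all

theorem TensorProduct.eq_zero_of_forall_dualDistrib₃_apply_eq_zero {t : M ⊗[R] (N ⊗[R] L)}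
    (ht : ∀ f g h, dualDistrib₃ f g h t = 0) : t = 0 := by
  refine eq_zero_of_forall_dualDistrib_apply_eq_zero fun f ψ => ?_
  obtain ⟨x, rfl⟩ := (dualDistribEquiv R N L).surjective ψ
  induction x using TensorProduct.induction_on with
  | zero => simp
  | tmul g h => exact ht f g h
  | add x y hx hy => simp_all [tmul_add]

end Separation

section Contractions

variable {k A : Type*} [Field k] [AddCommGroup A] [Module k A]

lemma dualDistrib_apply_eq_rPlus (f g : Module.Dual k A) (r : A ⊗[k] A) :
    dualDistrib k A A (f ⊗ₜ g) r = g (rPlus r f) := by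
  induction r using TensorProduct.induction_on with
  | zero => simp
  | tmul a b => simp
  | add x y hx hy => simp_all

lemma dualDistrib_apply_tauT (f g : Module.Dual k A) (r : A ⊗[k] A) :
    dualDistrib k A A (f ⊗ₜ g) (tauT r) = dualDistrib k A A (g ⊗ₜ f) r := by
  induction r using TensorProduct.induction_on with
  | zero => simp
  | tmul a b => simp [tauT, mul_comm]
  | add x y hx hy => simp_all

lemma tauT_eq_neg_of_rPlus_skew [FiniteDimensional k A] {r : A ⊗[k] A}
    (hr : ∀ f g : Module.Dual k A, g (rPlus r f) = - f (rPlus r g)) : tauT r = -r := by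
  rw [← sub_eq_zero, sub_neg_eq_add]
  refine eq_zero_of_forall_dualDistrib_apply_eq_zero fun f g => ?_
  rw [map_add, dualDistrib_apply_tauT, dualDistrib_apply_eq_rPlus, dualDistrib_apply_eq_rPlus, hr,
    neg_add_cancel]

variable (m : A →ₗ[k] A →ₗ[k] A) (f g h : Module.Dual k A) (r s : A ⊗[k] A)

lemma dualDistrib₃_T1213 :
    dualDistrib₃ f g h (T1213 m (r ⊗ₜ s)) = f (m (rPlus (tauT r) g) (rPlus (tauT s) h)) := by
  induction r using TensorProduct.induction_on with
  | zero => simp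
  | add x y hx hy => simp_all [add_tmul]
  | tmul a b =>
    induction s using TensorProduct.induction_on with
    | zero => simp
    | add x y hx hy => simp_all [tmul_add]
    | tmul c d => simp [T1213, tauT]; ring

lemma dualDistrib₃_T1323 :
    dualDistrib₃ f g h (T1323 m (r ⊗ₜ s)) = h (m (rPlus r f) (rPlus s g)) := by
  induction r using TensorProduct.induction_on with
  | zero => simp
  | add x y hx hy => simp_all [add_tmul]
  | tmul a b =>
    induction s using TensorProduct.induction_on with
    | zero => simp
    | add x y hx hy => simp_all [tmul_add]
    | tmul c d => simp [T1323, mul_left_comm]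

lemma dualDistrib₃_T1223 :
    dualDistrib₃ f g h (T1223 m (r ⊗ₜ s)) = g (m (rPlus r f) (rPlus (tauT s) h)) := by
  induction r using TensorProduct.induction_on with
  | zero => simp
  | add x y hx hy => simp_all [add_tmul]
  | tmul a b =>
    induction s using TensorProduct.induction_on with
    | zero => simp
    | add x y hx hy => simp_all [tmul_add]
    | tmul c d => simp [T1223, tauT]; ring

lemma dualDistrib₃_T2312 :
    dualDistrib₃ f g h (T2312 m (r ⊗ₜ s)) = g (m (rPlus (tauT s) h) (rPlus r f)) := by
  induction r using TensorProduct.induction_on with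
  | zero => simp
  | add x y hx hy => simp_all [add_tmul]
  | tmul a b =>
    induction s using TensorProduct.induction_on with
    | zero => simp
    | add x y hx hy => simp_all [tmul_add]
    | tmul c d => simp [T2312, tauT, mul_comm]

lemma dualDistrib₃_cybe_of_antisymm (hr : tauT r = -r) :
    dualDistrib₃ f g h (cybe m r) = f (m (rPlus r g) (rPlus r h)) + h (m (rPlus r f) (rPlus r g))
      - g (m (rPlus r f) (rPlus r h)) := by
  simp only [cybe, map_add, dualDistrib₃_T1213, dualDistrib₃_T1323, dualDistrib₃_T1223, hr,
    map_neg, LinearMap.neg_apply, neg_neg]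
  ring

lemma dualDistrib₃_aybe_of_antisymm (hr : tauT r = -r) :
    dualDistrib₃ f g h (aybe m r) = f (m (rPlus r g) (rPlus r h)) + h (m (rPlus r f) (rPlus r g))
      + g (m (rPlus r h) (rPlus r f)) := by
  simp only [aybe, map_add, map_sub, dualDistrib₃_T1213, dualDistrib₃_T1323, dualDistrib₃_T2312,
    hr, map_neg, LinearMap.neg_apply, neg_neg]
  ring

end Contractions

section InvariantForm

variable {k A : Type*} [CommRing k] [AddCommGroup A] [Module k A]
  {B : A →ₗ[k] A →ₗ[k] k} {m : A →ₗ[k] A →ₗ[k] A} {P : A →ₗ[k] A}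

lemma invariant_form_cyclic (hsymm : ∀ a b, B a b = B b a)
    (hinv : ∀ a b c, B (m a b) c = B a (m b c)) (a b c : A) : B a (m b c) = B c (m a b) := by
  rw [← hinv, hsymm]

lemma invariant_form_apply_rotaBaxter (hskew : ∀ a b, B a (P b) = -B (P a) b)
    (hP : ∀ a b, m (P a) (P b) = P (m (P a) b + m a (P b))) (u v w : A) :
    B u (m (P v) (P w)) = -(B (P u) (m (P v) w) + B (P u) (m v (P w))) := by
  rw [hP, hskew, map_add]

lemma cybe_form_eq_zero (hsymm : ∀ a b, B a b = B b a)
    (hinv : ∀ a b c, B (m a b) c = B a (m b c)) (hskew : ∀ a b, B a (P b) = -B (P a) b)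
    (hP : ∀ a b, m (P a) (P b) = P (m (P a) b + m a (P b)))
    (hanti : ∀ a b, m a b = -m b a) (u v w : A) :
    B u (m (P v) (P w)) + B w (m (P u) (P v)) - B v (m (P u) (P w)) = 0 := by
  have hcyc := invariant_form_cyclic hsymm hinv
  have h₃ : B v (m (P u) (P w)) = -B (P u) (m v (P w)) := by
    rw [hcyc, hanti, map_neg, ← hcyc]
  linear_combination invariant_form_apply_rotaBaxter hskew hP u v w + (hcyc (P u) (P v) w).symm - h₃

lemma aybe_form_eq_zero (hsymm : ∀ a b, B a b = B b a)
    (hinv : ∀ a b c, B (m a b) c = B a (m b c)) (hskew : ∀ a b, B a (P b) = -B (P a) b)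
    (hP : ∀ a b, m (P a) (P b) = P (m (P a) b + m a (P b)))
    (u v w : A) :
    B u (m (P v) (P w)) + B w (m (P u) (P v)) + B v (m (P w) (P u)) = 0 := by
  have hcyc := invariant_form_cyclic hsymm hinv
  have h₃ : B v (m (P w) (P u)) = B (P u) (m v (P w)) :=
    ((hcyc (P u) v (P w)).trans (hcyc (P w) (P u) v)).symm
  linear_combination invariant_form_apply_rotaBaxter hskew hP u v w + (hcyc (P u) (P v) w).symm + h₃

end InvariantForm

/-- a quadratic Rota–Baxter Poisson algebra of weight `0` yields an
antisymmetric solution of the Poisson Yang–Baxter equation, hence a triangular Poisson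
bialgebra. -/
theorem statement14 {k A : Type*} [Field k] [AddCommGroup A] [Module k A]
    [FiniteDimensional k A]
    (br mul : A →ₗ[k] A →ₗ[k] A) (B : A →ₗ[k] A →ₗ[k] k) (P : A →ₗ[k] A)
    (hQ : IsQuadraticRotaBaxter br mul B 0 P)
    (IB : Module.Dual k A ≃ₗ[k] A) (hIB : ∀ a b, IB.symm a b = B a b)
    (r : A ⊗[k] A) (hr : ∀ x y : Module.Dual k A, y (rPlus r x) = y (P (IB x))) :
    tauT r = - r ∧ IsPYBESolution br mul r := by
  obtain ⟨hpoisson, hsymm, -, hbrInv, hmulInv, ⟨hbrRB, hmulRB⟩, hcompat⟩ := hQ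
  have hskew : ∀ a b, B a (P b) = -B (P a) b := fun a b =>
    eq_neg_of_add_eq_zero_left (by simpa using hcompat a b)
  have hdual : ∀ (f : Module.Dual k A) x, f x = B (IB f) x := fun f x => by
    rw [← hIB, IB.symm_apply_apply]
  have hrPlus : ∀ f, rPlus r f = P (IB f) := fun f =>
    sub_eq_zero.mp <| (Module.forall_dual_apply_eq_zero_iff k _).mp fun y => by
      rw [map_sub, hr, sub_self]
  have hanti : tauT r = -r := tauT_eq_neg_of_rPlus_skew fun f g => by
    rw [hrPlus, hrPlus, hdual, hdual f, hskew, hsymm]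
  refine ⟨hanti, eq_zero_of_forall_dualDistrib₃_apply_eq_zero fun f g h => ?_,
    eq_zero_of_forall_dualDistrib₃_apply_eq_zero fun f g h => ?_⟩
  · rw [dualDistrib₃_cybe_of_antisymm br f g h r hanti, hrPlus, hrPlus, hrPlus, hdual f, hdual g,
      hdual h]
    exact cybe_form_eq_zero hsymm hbrInv hskew (fun a b => by simpa using hbrRB a b)
      hpoisson.antisymm _ _ _
  · rw [dualDistrib₃_aybe_of_antisymm mul f g h r hanti, hrPlus, hrPlus, hrPlus, hdual f, hdual g,
      hdual h]
    exact aybe_form_eq_zero hsymm hmulInv hskew (fun a b => by simpa using hmulRB a b) _ _ _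
end

section
/- Let (A,[·,·],·) be a finite-dimensional Poisson algebra over a field and r ∈ A⊗A a solution of the Poisson Yang–Baxter equation whose symmetric part is (ad,L)-invariant and such that I_r = r₊ − r₋ is a linear isomorphism (i.e., r gives a factorizable Poisson bialgebra). Fix λ ≠ 0 in the base field and define P = −λ·r₊ ∘ I_r⁻¹ and 𝔅(a,b) = −λ⟨I_r⁻¹(a), b⟩. Then ((A,[·,·],·),𝔅,P) is a quadratic Rota–Baxter Poisson algebra of weight λ. -/
open TensorProduct

/-!
The symmetric part `S` of `r` is `(ad, L)`-invariant and `I_r = r₊ - r₋ = 2 S₊`, so `I_r`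
intertwines `ad` and `L` with their coadjoint actions and is self-adjoint for the natural
pairing; this makes `𝔅` symmetric and invariant. Contracting `C(r) = 0` and `A(r) = 0` against
two covectors shows that `r₊` and `r₋` are both homomorphisms from `(A*, [·,·]_r, ·_r)` to `A`.
Whenever `I = f - g` is bijective and `f`, `g` are homomorphisms, `-λ f I⁻¹` is a Rota–Baxter
operator of weight `λ`. Compatibility of `P` with `𝔅` is the identity
`⟨x, r₊ y⟩ + ⟨y, r₊ x⟩ = ⟨x, I_r y⟩`.
-/

section TensorLegs

variable {k A : Type*} [Field k] [AddCommGroup A] [Module k A]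

@[simp] lemma rMinus_tmul (a b : A) (f : Module.Dual k A) :
    rMinus (a ⊗ₜ[k] b) f = -(f b • a) := rfl

lemma apply_rMinus (t : A ⊗[k] A) (x y : Module.Dual k A) :
    y (rMinus t x) = -x (rPlus t y) := by
  induction t using TensorProduct.induction_on with
  | zero => simp
  | tmul a b => simp [mul_comm]
  | add s t hs ht => simp [hs, ht]; abel

lemma rPlus_sub_rMinus (t : A ⊗[k] A) (x : Module.Dual k A) :
    rPlus t x - rMinus t x = rPlus (t + tauT t) x := by
  simp [rMinus, sub_eq_add_neg]

lemma rPlus_map_left (f : A →ₗ[k] A) (t : A ⊗[k] A) (x : Module.Dual k A) :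
    rPlus (TensorProduct.map f LinearMap.id t) x = rPlus t (f.dualMap x) := by
  induction t using TensorProduct.induction_on with
  | zero => simp
  | tmul a b => simp
  | add s t hs ht => simp [hs, ht]

lemma rPlus_map_right (g : A →ₗ[k] A) (t : A ⊗[k] A) (x : Module.Dual k A) :
    rPlus (TensorProduct.map LinearMap.id g t) x = g (rPlus t x) := by
  induction t using TensorProduct.induction_on with
  | zero => simp
  | tmul a b => simp
  | add s t hs ht => simp [hs, ht]

noncomputable def contract₁₂ (x y : Module.Dual k A) : A ⊗[k] (A ⊗[k] A) →ₗ[k] A :=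
  TensorProduct.lift (x.smulRight (rPlus.flip y))

noncomputable def contract₂₃ (y z : Module.Dual k A) : A ⊗[k] (A ⊗[k] A) →ₗ[k] A :=
  TensorProduct.lift ((TensorProduct.lift (y.smulRight z)).smulRight LinearMap.id) ∘ₗ
    (TensorProduct.comm k A (A ⊗[k] A)).toLinearMap

@[simp] lemma contract₁₂_tmul (x y : Module.Dual k A) (a b c : A) :
    contract₁₂ x y (a ⊗ₜ[k] (b ⊗ₜ[k] c)) = x a • y b • c := rfl

@[simp] lemma contract₂₃_tmul (y z : Module.Dual k A) (a b c : A) :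
    contract₂₃ y z (a ⊗ₜ[k] (b ⊗ₜ[k] c)) = (y b * z c) • a := by
  simp [contract₂₃]

variable (m : A →ₗ[k] A →ₗ[k] A)

@[simp] lemma T1213_tmul (a b c d : A) :
    T1213 m ((a ⊗ₜ[k] b) ⊗ₜ[k] (c ⊗ₜ[k] d)) = m a c ⊗ₜ[k] (b ⊗ₜ[k] d) := by
  simp [T1213]

@[simp] lemma T1323_tmul (a b c d : A) :
    T1323 m ((a ⊗ₜ[k] b) ⊗ₜ[k] (c ⊗ₜ[k] d)) = a ⊗ₜ[k] (c ⊗ₜ[k] m b d) := by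
  simp [T1323]

@[simp] lemma T1223_tmul (a b c d : A) :
    T1223 m ((a ⊗ₜ[k] b) ⊗ₜ[k] (c ⊗ₜ[k] d)) = a ⊗ₜ[k] (m b c ⊗ₜ[k] d) := by
  simp [T1223]

@[simp] lemma T2312_tmul (a b c d : A) :
    T2312 m ((a ⊗ₜ[k] b) ⊗ₜ[k] (c ⊗ₜ[k] d)) = a ⊗ₜ[k] (m c b ⊗ₜ[k] d) := by
  simp [T2312]

lemma contract₁₂_T1213 (x y : Module.Dual k A) (r₁ r₂ : A ⊗[k] A) :
    contract₁₂ x y (T1213 m (r₁ ⊗ₜ[k] r₂)) = -rPlus r₂ ((m (rMinus r₁ y)).dualMap x) := by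
  induction r₁ using TensorProduct.induction_on with
  | zero => simp [LinearMap.dualMap_apply']
  | add s t hs ht =>
    simp only [add_tmul, map_add, LinearMap.add_apply, dualMap_add_apply, neg_add, hs, ht]
  | tmul a b =>
    induction r₂ using TensorProduct.induction_on with
    | zero => simp [LinearMap.dualMap_apply']
    | add s t hs ht => simp only [tmul_add, map_add, LinearMap.add_apply, neg_add, hs, ht]
    | tmul c d => simp [smul_smul, mul_comm]

lemma contract₁₂_T1323 (x y : Module.Dual k A) (r₁ r₂ : A ⊗[k] A) :
    contract₁₂ x y (T1323 m (r₁ ⊗ₜ[k] r₂)) = m (rPlus r₁ x) (rPlus r₂ y) := by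
  induction r₁ using TensorProduct.induction_on with
  | zero => simp
  | add s t hs ht => simp only [add_tmul, map_add, LinearMap.add_apply, hs, ht]
  | tmul a b =>
    induction r₂ using TensorProduct.induction_on with
    | zero => simp
    | add s t hs ht => simp only [tmul_add, map_add, LinearMap.add_apply, hs, ht]
    | tmul c d => simp [smul_smul, mul_comm]

lemma contract₁₂_T1223 (x y : Module.Dual k A) (r₁ r₂ : A ⊗[k] A) :
    contract₁₂ x y (T1223 m (r₁ ⊗ₜ[k] r₂)) = rPlus r₂ ((m (rPlus r₁ x)).dualMap y) := by
  induction r₁ using TensorProduct.induction_on with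
  | zero => simp [LinearMap.dualMap_apply']
  | add s t hs ht => simp only [add_tmul, map_add, LinearMap.add_apply, dualMap_add_apply, hs, ht]
  | tmul a b =>
    induction r₂ using TensorProduct.induction_on with
    | zero => simp [LinearMap.dualMap_apply']
    | add s t hs ht => simp only [tmul_add, map_add, LinearMap.add_apply, hs, ht]
    | tmul c d => simp [smul_smul]

lemma contract₁₂_T2312 (x y : Module.Dual k A) (r₁ r₂ : A ⊗[k] A) :
    contract₁₂ x y (T2312 m (r₁ ⊗ₜ[k] r₂)) = rPlus r₂ ((m.flip (rPlus r₁ x)).dualMap y) := by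
  induction r₁ using TensorProduct.induction_on with
  | zero => simp [LinearMap.dualMap_apply']
  | add s t hs ht => simp only [add_tmul, map_add, LinearMap.add_apply, dualMap_add_apply, hs, ht]
  | tmul a b =>
    induction r₂ using TensorProduct.induction_on with
    | zero => simp [LinearMap.dualMap_apply']
    | add s t hs ht => simp only [tmul_add, map_add, LinearMap.add_apply, hs, ht]
    | tmul c d => simp [smul_smul]

lemma contract₂₃_T1213 (x y : Module.Dual k A) (r₁ r₂ : A ⊗[k] A) :
    contract₂₃ x y (T1213 m (r₁ ⊗ₜ[k] r₂)) = m (rMinus r₁ x) (rMinus r₂ y) := by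
  induction r₁ using TensorProduct.induction_on with
  | zero => simp
  | add s t hs ht => simp only [add_tmul, map_add, LinearMap.add_apply, hs, ht]
  | tmul a b =>
    induction r₂ using TensorProduct.induction_on with
    | zero => simp
    | add s t hs ht => simp only [tmul_add, map_add, LinearMap.add_apply, hs, ht]
    | tmul c d => simp [smul_smul]

lemma contract₂₃_T1323 (x y : Module.Dual k A) (r₁ r₂ : A ⊗[k] A) :
    contract₂₃ x y (T1323 m (r₁ ⊗ₜ[k] r₂)) = -rMinus r₁ ((m.flip (rPlus r₂ x)).dualMap y) := by
  induction r₁ using TensorProduct.induction_on with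
  | zero => simp [LinearMap.dualMap_apply']
  | add s t hs ht => simp only [add_tmul, map_add, LinearMap.add_apply, neg_add, hs, ht]
  | tmul a b =>
    induction r₂ using TensorProduct.induction_on with
    | zero => simp [LinearMap.dualMap_apply']
    | add s t hs ht =>
      simp only [tmul_add, map_add, LinearMap.add_apply, dualMap_add_apply, neg_add, hs, ht]
    | tmul c d => simp [smul_smul]

lemma contract₂₃_T1223 (x y : Module.Dual k A) (r₁ r₂ : A ⊗[k] A) :
    contract₂₃ x y (T1223 m (r₁ ⊗ₜ[k] r₂)) = rMinus r₁ ((m.flip (rMinus r₂ y)).dualMap x) := by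
  induction r₁ using TensorProduct.induction_on with
  | zero => simp [LinearMap.dualMap_apply']
  | add s t hs ht => simp only [add_tmul, map_add, LinearMap.add_apply, hs, ht]
  | tmul a b =>
    induction r₂ using TensorProduct.induction_on with
    | zero => simp [LinearMap.dualMap_apply']
    | add s t hs ht => simp only [tmul_add, map_add, LinearMap.add_apply, dualMap_add_apply, hs, ht]
    | tmul c d => simp [mul_comm]

lemma contract₂₃_T2312 (x y : Module.Dual k A) (r₁ r₂ : A ⊗[k] A) :
    contract₂₃ x y (T2312 m (r₁ ⊗ₜ[k] r₂)) = rMinus r₁ ((m (rMinus r₂ y)).dualMap x) := by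
  induction r₁ using TensorProduct.induction_on with
  | zero => simp [LinearMap.dualMap_apply']
  | add s t hs ht => simp only [add_tmul, map_add, LinearMap.add_apply, hs, ht]
  | tmul a b =>
    induction r₂ using TensorProduct.induction_on with
    | zero => simp [LinearMap.dualMap_apply']
    | add s t hs ht => simp only [tmul_add, map_add, LinearMap.add_apply, dualMap_add_apply, hs, ht]
    | tmul c d => simp [mul_comm]

end TensorLegs

section YangBaxter

variable {k A : Type*} [Field k] [AddCommGroup A] [Module k A]
  (br mul : A →ₗ[k] A →ₗ[k] A) {r : A ⊗[k] A}

lemma br_rPlus_rPlus_of_cybe_eq_zero (hr : cybe br r = 0) (x y : Module.Dual k A) :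
    br (rPlus r x) (rPlus r y) = rPlus r (dualBr br r x y) := by
  have h := congrArg (contract₁₂ x y) hr
  simp only [cybe, map_add, map_zero, contract₁₂_T1213, contract₁₂_T1323,
    contract₁₂_T1223] at h
  simp only [dualBr, LinearMap.mk₂_apply, map_add, map_neg]
  rw [← sub_eq_zero, ← h]
  abel

lemma br_rMinus_rMinus_of_cybe_eq_zero (hanti : ∀ a b, br a b = -br b a)
    (hr : cybe br r = 0) (x y : Module.Dual k A) :
    br (rMinus r x) (rMinus r y) = rMinus r (dualBr br r x y) := by
  have hflip : br.flip = -br := by ext a b; simp [hanti b a]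
  have h := congrArg (contract₂₃ x y) hr
  simp only [cybe, map_add, map_zero, contract₂₃_T1213, contract₂₃_T1323,
    contract₂₃_T1223, hflip, LinearMap.neg_apply, dualMap_neg_apply, map_neg] at h
  simp only [dualBr, LinearMap.mk₂_apply, map_add, map_neg]
  rw [← sub_eq_zero, ← h]
  abel

lemma mul_rPlus_rPlus_of_aybe_eq_zero (hcomm : ∀ a b, mul a b = mul b a)
    (hr : aybe mul r = 0) (x y : Module.Dual k A) :
    mul (rPlus r x) (rPlus r y) = rPlus r (dualMul mul r x y) := by
  have hflip : mul.flip = mul := by ext a b; simp [hcomm b a]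
  have h := congrArg (contract₁₂ x y) hr
  simp only [aybe, map_add, map_sub, map_zero, contract₁₂_T1213, contract₁₂_T1323,
    contract₁₂_T2312, hflip] at h
  simp only [dualMul, LinearMap.mk₂_apply, map_add]
  rw [← sub_eq_zero, ← h]
  abel

lemma mul_rMinus_rMinus_of_aybe_eq_zero (hcomm : ∀ a b, mul a b = mul b a)
    (hr : aybe mul r = 0) (x y : Module.Dual k A) :
    mul (rMinus r x) (rMinus r y) = rMinus r (dualMul mul r x y) := by
  have hflip : mul.flip = mul := by ext a b; simp [hcomm b a]
  have h := congrArg (contract₂₃ x y) hr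
  simp only [aybe, map_add, map_sub, map_zero, contract₂₃_T1213, contract₂₃_T1323,
    contract₂₃_T2312, hflip] at h
  simp only [dualMul, LinearMap.mk₂_apply, map_add]
  rw [← sub_eq_zero, ← h]
  abel

end YangBaxter

section Factorization

variable {R A V : Type*} [CommRing R] [AddCommGroup A] [Module R A] [AddCommGroup V] [Module R V]

theorem rotaBaxter_of_factorization (m : A →ₗ[R] A →ₗ[R] A) (mV : V →ₗ[R] V →ₗ[R] V)
    (f g : V →ₗ[R] A) (E : V ≃ₗ[R] A) (hE : ∀ x, E x = f x - g x)
    (hf : ∀ x y, m (f x) (f y) = f (mV x y)) (hg : ∀ x y, m (g x) (g y) = g (mV x y))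
    (lam : R) (a b : A) :
    let P := (-lam) • (f ∘ₗ E.symm.toLinearMap)
    m (P a) (P b) = P (m (P a) b + m a (P b) + lam • m a b) := by
  obtain ⟨x, rfl⟩ := E.surjective a
  obtain ⟨y, rfl⟩ := E.surjective b
  have key : (-lam) • m (f x) (E y) + (-lam) • m (E x) (f y) + lam • m (E x) (E y) =
      (-lam) • E (mV x y) := by
    simp only [hE, ← hf, ← hg, map_sub, LinearMap.sub_apply]
    module
  simp only [LinearMap.smul_apply, LinearMap.comp_apply, LinearEquiv.coe_coe,
    LinearEquiv.symm_apply_apply, map_smul, key, hf, smul_smul]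

end Factorization

section InvariantForm

variable {k A : Type*} [Field k] [AddCommGroup A] [Module k A]
  {br mul : A →ₗ[k] A →ₗ[k] A}

lemma IsAdLInvariant.add {s t : A ⊗[k] A} (hs : IsAdLInvariant br mul s)
    (ht : IsAdLInvariant br mul t) : IsAdLInvariant br mul (s + t) := fun a => by
  simp only [map_add]
  constructor
  · rw [add_add_add_comm, (hs a).1, (ht a).1, add_zero]
  · rw [add_sub_add_comm, (hs a).2, (ht a).2, add_zero]

lemma br_rPlus_of_isAdLInvariant {s : A ⊗[k] A} (hs : IsAdLInvariant br mul s)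
    (a : A) (x : Module.Dual k A) : br a (rPlus s x) = -rPlus s ((br a).dualMap x) := by
  have h := congrArg (fun t => rPlus t x) (hs a).1
  simp only [map_add, LinearMap.add_apply, rPlus_map_left, rPlus_map_right, map_zero,
    LinearMap.zero_apply] at h
  exact eq_neg_of_add_eq_zero_right h

lemma mul_rPlus_of_isAdLInvariant {s : A ⊗[k] A} (hs : IsAdLInvariant br mul s)
    (a : A) (x : Module.Dual k A) : mul a (rPlus s x) = rPlus s ((mul a).dualMap x) := by
  have h := congrArg (fun t => rPlus t x) (hs a).2
  simp only [map_sub, LinearMap.sub_apply, rPlus_map_left, rPlus_map_right, map_zero,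
    LinearMap.zero_apply] at h
  exact (sub_eq_zero.mp h).symm

variable (E : Module.Dual k A ≃ₗ[k] A)

lemma symm_apply_comm {r : A ⊗[k] A} (hE : ∀ x, E x = rPlus r x - rMinus r x) (a b : A) :
    E.symm a b = E.symm b a := by
  obtain ⟨x, rfl⟩ := E.surjective a
  obtain ⟨y, rfl⟩ := E.surjective b
  rw [E.symm_apply_apply, E.symm_apply_apply, hE, hE, map_sub, map_sub, apply_rMinus,
    apply_rMinus]
  ring

lemma symm_br_of_isAdLInvariant {s : A ⊗[k] A} (hE : ∀ x, E x = rPlus s x)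
    (hs : IsAdLInvariant br mul s) (a b : A) :
    E.symm (br a b) = -(br a).dualMap (E.symm b) := by
  rw [E.symm_apply_eq, map_neg, hE, ← br_rPlus_of_isAdLInvariant hs, ← hE,
    E.apply_symm_apply]

lemma symm_mul_of_isAdLInvariant {s : A ⊗[k] A} (hE : ∀ x, E x = rPlus s x)
    (hs : IsAdLInvariant br mul s) (a b : A) :
    E.symm (mul a b) = (mul a).dualMap (E.symm b) := by
  rw [E.symm_apply_eq, hE, ← mul_rPlus_of_isAdLInvariant hs, ← hE, E.apply_symm_apply]

lemma symm_br_apply (hanti : ∀ a b, br a b = -br b a) (hsymm : ∀ a b, E.symm a b = E.symm b a)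
    (hbr : ∀ a b, E.symm (br a b) = -(br a).dualMap (E.symm b)) (a b c : A) :
    E.symm (br a b) c = E.symm a (br b c) := by
  rw [hsymm (br a b), hsymm a, hbr, LinearMap.neg_apply, LinearMap.dualMap_apply, hanti b a,
    map_neg, neg_neg]

lemma symm_mul_apply (hcomm : ∀ a b, mul a b = mul b a) (hsymm : ∀ a b, E.symm a b = E.symm b a)
    (hmul : ∀ a b, E.symm (mul a b) = (mul a).dualMap (E.symm b)) (a b c : A) :
    E.symm (mul a b) c = E.symm a (mul b c) := by
  rw [hsymm (mul a b), hsymm a, hmul, LinearMap.dualMap_apply, hcomm b a]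

lemma symm_apply_rPlus_add_symm_rPlus_apply {r : A ⊗[k] A}
    (hE : ∀ x, E x = rPlus r x - rMinus r x) (a b : A) :
    E.symm a (rPlus r (E.symm b)) + E.symm (rPlus r (E.symm a)) b = E.symm a b := by
  rw [symm_apply_comm E hE _ b]
  obtain ⟨x, rfl⟩ := E.surjective a
  obtain ⟨y, rfl⟩ := E.surjective b
  rw [E.symm_apply_apply, E.symm_apply_apply, hE y, map_sub, apply_rMinus]
  ring

end InvariantForm

theorem statement15_general {k A : Type*} [Field k] [AddCommGroup A] [Module k A]
    (br mul : A →ₗ[k] A →ₗ[k] A) (hP : IsPoisson br mul)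
    (r S Lam : A ⊗[k] A) (hdec : r = S + Lam) (hS : tauT S = S) (hLam : tauT Lam = - Lam)
    (hr : IsPYBESolution br mul r) (hinv : IsAdLInvariant br mul S)
    (Ir : Module.Dual k A ≃ₗ[k] A) (hIr : ∀ x, Ir x = rPlus r x - rMinus r x)
    (lam : k) (hlam : lam ≠ 0) :
    IsQuadraticRotaBaxter br mul
      ((-lam) • (Ir.symm.toLinearMap : A →ₗ[k] Module.Dual k A)) lam
      ((-lam) • ((rPlus r) ∘ₗ Ir.symm.toLinearMap)) := by
  have hIrS : ∀ x, Ir x = rPlus (S + S) x := fun x => by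
    rw [hIr, rPlus_sub_rMinus, hdec, map_add tauT, hS, hLam]
    abel_nf
  have hsymm := symm_apply_comm Ir hIr
  have hbr := symm_br_of_isAdLInvariant Ir hIrS (hinv.add hinv)
  have hmul := symm_mul_of_isAdLInvariant Ir hIrS (hinv.add hinv)
  refine ⟨hP, fun a b => ?_, fun a ha => ?_, fun a b c => ?_, fun a b c => ?_, ⟨fun a b => ?_,
    fun a b => ?_⟩, fun a b => ?_⟩
  · simp [hsymm a b]
  · have h : Ir.symm a = 0 := LinearMap.ext fun b => by simpa [hlam] using ha b
    simpa using congrArg Ir h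
  · simp [symm_br_apply Ir hP.antisymm hsymm hbr]
  · simp [symm_mul_apply Ir hP.comm hsymm hmul]
  · exact rotaBaxter_of_factorization br (dualBr br r) (rPlus r) (rMinus r) Ir hIr
      (br_rPlus_rPlus_of_cybe_eq_zero br hr.1)
      (br_rMinus_rMinus_of_cybe_eq_zero br hP.antisymm hr.1) lam a b
  · exact rotaBaxter_of_factorization mul (dualMul mul r) (rPlus r) (rMinus r) Ir hIr
      (mul_rPlus_rPlus_of_aybe_eq_zero mul hP.comm hr.2)
      (mul_rMinus_rMinus_of_aybe_eq_zero mul hP.comm hr.2) lam a b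
  · have h := symm_apply_rPlus_add_symm_rPlus_apply Ir hIr a b
    simp only [LinearMap.smul_apply, LinearMap.comp_apply, LinearEquiv.coe_coe, map_smul,
      smul_eq_mul]
    linear_combination lam ^ 2 * h

/-- a factorizable Poisson bialgebra gives rise to a quadratic Rota–Baxter
Poisson algebra of weight `λ ≠ 0`, with `P = −λ·r₊ ∘ I_r⁻¹` and `𝔅(a,b) = −λ⟨I_r⁻¹(a),b⟩`. -/
theorem statement15 {k A : Type*} [Field k] [AddCommGroup A] [Module k A]
    [FiniteDimensional k A]
    (br mul : A →ₗ[k] A →ₗ[k] A) (hP : IsPoisson br mul)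
    (r S Lam : A ⊗[k] A) (hdec : r = S + Lam) (hS : tauT S = S) (hLam : tauT Lam = - Lam)
    (hr : IsPYBESolution br mul r) (hinv : IsAdLInvariant br mul S)
    (Ir : Module.Dual k A ≃ₗ[k] A) (hIr : ∀ x, Ir x = rPlus r x - rMinus r x)
    (lam : k) (hlam : lam ≠ 0) :
    IsQuadraticRotaBaxter br mul
      ((-lam) • (Ir.symm.toLinearMap : A →ₗ[k] Module.Dual k A)) lam
      ((-lam) • ((rPlus r) ∘ₗ Ir.symm.toLinearMap)) :=
  statement15_general br mul hP r S Lam hdec hS hLam hr hinv Ir hIr lam hlam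
end
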